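/- Every edge of the Euclidean minimum spanning tree of a finite set A of points in general position in ℝ² is an edge of the Delaunay triangulation of A. Concretely: if {a, b} is an edge of the minimum spanning tree of A, then the open disk with diameter segment ab contains no point of A. -/

import Mathlib

open scoped Classical

noncomputable section

/-- Points of the Euclidean plane. -/
abbrev Pt := EuclideanSpace ℝ (Fin 2)

/-- The Euclidean length of a potential edge on points of `S`. -/
noncomputable def edgeLen (S : Finset Pt) : Sym2 S → ℝ :=
  Sym2.lift ⟨fun (a b : S) => dist (a : Pt) (b : Pt), fun a b => dist_comm (a : Pt) (b : Pt)⟩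

/-- The total Euclidean edge length of a graph on the points of `S`. -/
noncomputable def treeCost (S : Finset Pt) (T : SimpleGraph S) : ℝ :=
  ∑ e ∈ Finset.univ.filter (· ∈ T.edgeSet), edgeLen S e

/-!
Cut property: deleting the MST edge `ab` splits the tree into an `a`-side and a `b`-side.
If `x` lies on the `a`-side, replacing `ab` by `xb` gives another spanning tree, so minimality
forces `|ab| ≤ |xb|`; symmetrically `|ab| ≤ |xa|` on the `b`-side. By Apollonius' theorem,
`|xa|² + |xb|² = 2|xm|² + |ab|²/2` for the midpoint `m` of `ab`, so a point of the open
diametral disk is strictly closer than `|ab|` to each endpoint.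
-/

lemma EuclideanGeometry.half_dist_le_dist_midpoint_of_dist_le {V P : Type*}
    [NormedAddCommGroup V] [InnerProductSpace ℝ V] [MetricSpace P] [NormedAddTorsor V P]
    {a b x : P} (h : dist a b ≤ dist x b) : dist a b / 2 ≤ dist x (midpoint ℝ a b) := by
  have apollonius := dist_sq_add_dist_sq_eq_two_mul_dist_midpoint_sq_add_half_dist_sq x a b
  by_contra! hlt
  nlinarith [dist_nonneg (x := x) (y := midpoint ℝ a b), dist_nonneg (x := a) (y := b),
    sq_nonneg (dist x a)]

namespace SimpleGraph

variable {V : Type*} {G T : SimpleGraph V} {a b x : V}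

lemma Connected.reachable_deleteEdges_left_or_right (hG : G.Connected) (hab : G.Adj a b)
    (x : V) :
    (G.deleteEdges {s(a, b)}).Reachable x a ∨ (G.deleteEdges {s(a, b)}).Reachable x b := by
  obtain ⟨P, hP⟩ := hG.exists_isPath x a
  by_cases he : s(a, b) ∈ P.edges
  · have hb := P.snd_mem_support_of_mem_edges he
    have ha := Walk.endpoint_notMem_support_takeUntil hP hb hab.ne
    refine Or.inr ⟨(P.takeUntil b hb).toDeleteEdges {s(a, b)} fun e he' hea => ?_⟩
    rw [Set.mem_singleton_iff] at hea
    exact ha ((P.takeUntil b hb).fst_mem_support_of_mem_edges (hea ▸ he'))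
  · exact Or.inl ⟨P.toDeleteEdges {s(a, b)} fun e he' hea => he (hea ▸ he')⟩

lemma IsAcyclic.not_reachable_deleteEdges_of_reachable (hT : T.IsAcyclic) (hab : T.Adj a b)
    (hx : (T.deleteEdges {s(a, b)}).Reachable x a) :
    ¬ (T.deleteEdges {s(a, b)}).Reachable x b := fun hxb =>
  isBridge_iff.mp (isAcyclic_iff_forall_adj_isBridge.mp hT hab) (hx.symm.trans hxb)

lemma IsTree.deleteEdges_sup_edge (hT : T.IsTree) (hab : T.Adj a b)
    (hx : (T.deleteEdges {s(a, b)}).Reachable x a) :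
    (T.deleteEdges {s(a, b)} ⊔ edge x b).IsTree := by
  set G := T.deleteEdges {s(a, b)}
  have hxb : ¬ G.Reachable x b := hT.isAcyclic.not_reachable_deleteEdges_of_reachable hab hx
  have hxb_adj : (G ⊔ edge x b).Adj x b :=
    Or.inr ((edge_adj x b x b).mpr ⟨Or.inl ⟨rfl, rfl⟩, fun h => hxb (h ▸ Reachable.refl _)⟩)
  have hreach_b (u : V) : (G ⊔ edge x b).Reachable u b := by
    rcases hT.connected.reachable_deleteEdges_left_or_right hab u with h | h
    · exact ((h.trans hx.symm).mono le_sup_left).trans hxb_adj.reachable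
    · exact h.mono le_sup_left
  have : Nonempty V := ⟨x⟩
  exact ⟨.mk fun u v => (hreach_b u).trans (hreach_b v).symm,
    (hT.isAcyclic.anti (deleteEdges_le _)).sup_edge_of_not_reachable hxb⟩

end SimpleGraph

lemma treeCost_eq_add_of_edgeSet_eq_insert {S : Finset Pt} {G H : SimpleGraph S} {e : Sym2 S}
    (he : e ∉ G.edgeSet) (hH : H.edgeSet = insert e G.edgeSet) :
    treeCost S H = edgeLen S e + treeCost S G := by
  rw [treeCost, treeCost, ← Finset.sum_insert (by simpa using he)]
  congr 1
  ext f
  simp [hH]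

open SimpleGraph in
lemma dist_le_dist_of_reachable_deleteEdges_mst {A : Finset Pt} {T : SimpleGraph A}
    (hT : T.IsTree) (hmin : ∀ T' : SimpleGraph A, T'.IsTree → treeCost A T ≤ treeCost A T')
    {a b x : A} (hab : T.Adj a b) (hx : (T.deleteEdges {s(a, b)}).Reachable x a) :
    dist (a : Pt) b ≤ dist (x : Pt) b := by
  set G := T.deleteEdges {s(a, b)}
  have hxb : ¬ G.Reachable x b := hT.isAcyclic.not_reachable_deleteEdges_of_reachable hab hx
  have hx_ne_b : x ≠ b := fun h => hxb (h ▸ Reachable.refl _)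
  have hcost_T : treeCost A T = edgeLen A s(a, b) + treeCost A G := by
    refine treeCost_eq_add_of_edgeSet_eq_insert (by simp [G]) ?_
    rw [edgeSet_deleteEdges, Set.insert_sdiff_singleton,
      Set.insert_eq_of_mem (show s(a, b) ∈ T.edgeSet from hab)]
  have hcost_swap : treeCost A (G ⊔ edge x b) = edgeLen A s(x, b) + treeCost A G := by
    refine treeCost_eq_add_of_edgeSet_eq_insert (fun h => hxb (Adj.reachable h)) ?_
    rw [edgeSet_sup, edgeSet_edge_of_ne hx_ne_b, Set.union_singleton]
  have hswap := hmin _ (hT.deleteEdges_sup_edge hab hx)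
  rw [hcost_T, hcost_swap] at hswap
  simpa [edgeLen] using hswap

theorem mst_edge_has_empty_diametral_disk_general (A : Finset Pt)
    (T : SimpleGraph A) (hT : T.IsTree)
    (hmin : ∀ T' : SimpleGraph A, T'.IsTree → treeCost A T ≤ treeCost A T')
    (a b : A) (hab : T.Adj a b) :
    ∀ x ∈ A, dist (a : Pt) (b : Pt) / 2 ≤ dist x (midpoint ℝ (a : Pt) (b : Pt)) := by
  intro x hxA
  rcases hT.connected.reachable_deleteEdges_left_or_right hab ⟨x, hxA⟩ with h | h
  · exact EuclideanGeometry.half_dist_le_dist_midpoint_of_dist_le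
      (dist_le_dist_of_reachable_deleteEdges_mst hT hmin hab h :)
  · rw [Sym2.eq_swap] at h
    rw [dist_comm (a : Pt), midpoint_comm]
    exact EuclideanGeometry.half_dist_le_dist_midpoint_of_dist_le
      (dist_le_dist_of_reachable_deleteEdges_mst hT hmin hab.symm h :)

/-- For a finite planar point set in general position (all
pairwise distances distinct), every edge `{a,b}` of a Euclidean minimum spanning
tree has an empty open diametral disk: every point of `A` is at distance at least
`dist a b / 2` from the midpoint of `a` and `b`.  (Hence MST ⊆ Gabriel ⊆ Delaunay.) -/
theorem mst_edge_has_empty_diametral_disk (A : Finset Pt)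
    (hgen : ∀ a ∈ A, ∀ b ∈ A, ∀ c ∈ A, ∀ d ∈ A,
      a ≠ b → c ≠ d → dist a b = dist c d → ({a, b} : Finset Pt) = {c, d})
    (T : SimpleGraph A) (hT : T.IsTree)
    (hmin : ∀ T' : SimpleGraph A, T'.IsTree → treeCost A T ≤ treeCost A T')
    (a b : A) (hab : T.Adj a b) :
    ∀ x ∈ A, dist (a : Pt) (b : Pt) / 2 ≤ dist x (midpoint ℝ (a : Pt) (b : Pt)) :=
  mst_edge_has_empty_diametral_disk_general A T hT hmin a b hab
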